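/- arXiv:1711.04995 — 2 statements merged into one kernel-verified Lean document; each statement's English description precedes it below -/
import Mathlib

section
/- Let F : ℝ^n × ℝ^n → ℝ^q and f : ℝ^n × ℝ^μ → ℝ^n be smooth maps with F(x, f(x,u)) = 0 for all (x,u), and assume that for every (x,p) with F(x,p) = 0 there exists u ∈ ℝ^μ with p = f(x,u). Assume that for every (x_0,u_0) ∈ ℝ^n × ℝ^μ there exists a smooth curve x : ℝ → ℝ^n with x(0) = x_0 and x'(t) = f(x(t), u_0) for all t. Let φ : (ℝ^m)^{r+1} → ℝ^n be smooth and let ψ : (ℝ^n)^{s+1} → ℝ^m be smooth, and assume the flatness identity: for every smooth curve x : ℝ → ℝ^n satisfying F(x(t), x'(t)) = 0 for all t, setting y(t) = ψ(x(t), x'(t), …, x^{(s)}(t)), one has x(t) = φ(y(t), y'(t), …, y^{(r)}(t)) for all t. Then the map Φ : (ℝ^m)^{r+2} → ℝ^n × ℝ^n, Φ(y_0,…,y_{r+1}) = (φ(y_0,…,y_r), L_τφ(y_0,…,y_{r+1})), is surjective onto the set {(x,p) ∈ ℝ^n × ℝ^n : F(x,p) = 0}: for every (x_0,p_0) with F(x_0,p_0)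 = 0 there exist y_0,…,y_{r+1} ∈ ℝ^m with Φ(y_0,…,y_{r+1}) = (x_0,p_0). -/
/-- The operator `L_τ`: `L_τφ(y_0,…,y_{r+1}) = Σ_{i=0}^r (∂φ/∂y_i)(y_0,…,y_r)(y_{i+1})`,
where `∂φ/∂y_i` is the partial Fréchet derivative of `φ` in its `i`-th block variable. -/
noncomputable def Ltau {m n r : ℕ}
    (φ : (Fin (r+1) → (Fin m → ℝ)) → (Fin n → ℝ))
    (z : Fin (r+2) → (Fin m → ℝ)) : Fin n → ℝ :=
  ∑ i : Fin (r+1), fderiv ℝ φ (fun j => z j.castSucc) (Pi.single i (z i.succ))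

/-!
`L_τφ` is the total time derivative of `φ` along jets of curves:
`d/dt φ(y, y', …, y^{(r)}) = L_τφ(y, y', …, y^{(r+1)})`. Given `F(x₀, p₀) = 0`, write
`p₀ = f(x₀, u)` and take the trajectory `x` of `ẋ = f(x, u)` through `x₀`. It satisfies
`F(x, ẋ) = 0`, so flatness gives `x = φ(y, …, y^{(r)})` for the flat output `y`, and
differentiating at `t = 0` shows that the `(r+2)`-jet of `y` at `0` is mapped to `(x₀, p₀)`.
-/

open scoped ContDiff

variable {E : Type*} [NormedAddCommGroup E] [NormedSpace ℝ E]

noncomputable def curveJet (k : ℕ) (y : ℝ → E) (t : ℝ) : Fin k → E :=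
  fun i => iteratedDeriv i y t

theorem ContDiff.contDiff_curveJet {y : ℝ → E} (hy : ContDiff ℝ ∞ y) (k : ℕ) :
    ContDiff ℝ ∞ (curveJet k y) :=
  contDiff_pi.mpr fun i => by
    rw [show (fun t => curveJet k y t i) = deriv^[i] y from iteratedDeriv_eq_iterate]
    exact hy.iterate_deriv i

theorem ContDiff.hasDerivAt_curveJet {k : ℕ} {y : ℝ → E} (hy : ContDiff ℝ k y) (t : ℝ) :
    HasDerivAt (curveJet k y) (fun i : Fin k => iteratedDeriv (i + 1) y t) t := by
  refine hasDerivAt_pi.mpr fun i => ?_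
  rw [iteratedDeriv_succ]
  exact (hy.differentiable_iteratedDeriv i (mod_cast i.isLt) t).hasDerivAt

theorem Ltau_eq_fderiv {m n r : ℕ} (φ : (Fin (r+1) → (Fin m → ℝ)) → (Fin n → ℝ))
    (z : Fin (r+2) → (Fin m → ℝ)) :
    Ltau φ z = fderiv ℝ φ (fun j => z j.castSucc) (fun i => z i.succ) := by
  rw [Ltau, ← map_sum, Finset.univ_sum_single]

theorem hasDerivAt_comp_curveJet {m n r : ℕ} {φ : (Fin (r+1) → (Fin m → ℝ)) → (Fin n → ℝ)}
    {y : ℝ → (Fin m → ℝ)} (hy : ContDiff ℝ (r + 1) y) {t : ℝ}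
    (hφ : DifferentiableAt ℝ φ (curveJet (r+1) y t)) :
    HasDerivAt (fun τ => φ (curveJet (r+1) y τ)) (Ltau φ (curveJet (r+2) y t)) t := by
  rw [Ltau_eq_fderiv]
  exact hφ.hasFDerivAt.comp_hasDerivAt t (hy.hasDerivAt_curveJet t)

theorem stmt_3_general (n m q μ r s : ℕ)
    (F : (Fin n → ℝ) × (Fin n → ℝ) → (Fin q → ℝ))
    (f : (Fin n → ℝ) × (Fin μ → ℝ) → (Fin n → ℝ))
    (hFf : ∀ (x : Fin n → ℝ) (u : Fin μ → ℝ), F (x, f (x, u)) = 0)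
    (hparam : ∀ (x p : Fin n → ℝ), F (x, p) = 0 → ∃ u : Fin μ → ℝ, p = f (x, u))
    (hflow : ∀ (x₀ : Fin n → ℝ) (u₀ : Fin μ → ℝ), ∃ x : ℝ → (Fin n → ℝ),
      ContDiff ℝ (⊤ : ℕ∞) x ∧ x 0 = x₀ ∧ ∀ t : ℝ, deriv x t = f (x t, u₀))
    (φ : (Fin (r+1) → (Fin m → ℝ)) → (Fin n → ℝ)) (hφ : ContDiff ℝ (⊤ : ℕ∞) φ)
    (ψ : (Fin (s+1) → (Fin n → ℝ)) → (Fin m → ℝ)) (hψ : ContDiff ℝ (⊤ : ℕ∞) ψ)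
    (hflat : ∀ x : ℝ → (Fin n → ℝ), ContDiff ℝ (⊤ : ℕ∞) x →
      (∀ t : ℝ, F (x t, deriv x t) = 0) → ∀ t : ℝ,
      x t = φ (fun i : Fin (r+1) => iteratedDeriv i.val
        (fun τ : ℝ => ψ (fun j : Fin (s+1) => iteratedDeriv j.val x τ)) t)) :
    ∀ (x₀ p₀ : Fin n → ℝ), F (x₀, p₀) = 0 →
      ∃ z : Fin (r+2) → (Fin m → ℝ),
        φ (fun j => z j.castSucc) = x₀ ∧ Ltau φ z = p₀ := by
  intro x₀ p₀ hx₀p₀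
  obtain ⟨u, rfl⟩ := hparam x₀ p₀ hx₀p₀
  obtain ⟨x, hx, rfl, hx'⟩ := hflow x₀ u
  set y := fun τ => ψ (curveJet (s+1) x τ)
  have hy : ContDiff ℝ ∞ y := hψ.comp (hx.contDiff_curveJet (s+1))
  have hxφ : x = fun t => φ (curveJet (r+1) y t) :=
    funext <| hflat x hx fun t => by rw [hx' t]; exact hFf _ _
  refine ⟨curveJet (r+2) y 0, (congrFun hxφ 0).symm, ?_⟩
  have hφ' : DifferentiableAt ℝ φ (curveJet (r+1) y 0) := hφ.differentiable (by simp) _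
  rw [← hx', ← (hasDerivAt_comp_curveJet (hy.of_le (mod_cast le_top)) hφ').deriv, ← hxφ]

/-- For a differentially flat system, the map
`Φ(y_0,…,y_{r+1}) = (φ(y_0,…,y_r), L_τφ(y_0,…,y_{r+1}))` is surjective onto the
manifold `{(x,p) : F(x,p) = 0}`. -/
theorem stmt_3 (n m q μ r s : ℕ) (hn : 0 < n) (hm : 0 < m) (hq : 0 < q) (hμ : 0 < μ)
    (F : (Fin n → ℝ) × (Fin n → ℝ) → (Fin q → ℝ)) (hF : ContDiff ℝ (⊤ : ℕ∞) F)
    (f : (Fin n → ℝ) × (Fin μ → ℝ) → (Fin n → ℝ)) (hf : ContDiff ℝ (⊤ : ℕ∞) f)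
    (hFf : ∀ (x : Fin n → ℝ) (u : Fin μ → ℝ), F (x, f (x, u)) = 0)
    (hparam : ∀ (x p : Fin n → ℝ), F (x, p) = 0 → ∃ u : Fin μ → ℝ, p = f (x, u))
    (hflow : ∀ (x₀ : Fin n → ℝ) (u₀ : Fin μ → ℝ), ∃ x : ℝ → (Fin n → ℝ),
      ContDiff ℝ (⊤ : ℕ∞) x ∧ x 0 = x₀ ∧ ∀ t : ℝ, deriv x t = f (x t, u₀))
    (φ : (Fin (r+1) → (Fin m → ℝ)) → (Fin n → ℝ)) (hφ : ContDiff ℝ (⊤ : ℕ∞) φ)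
    (ψ : (Fin (s+1) → (Fin n → ℝ)) → (Fin m → ℝ)) (hψ : ContDiff ℝ (⊤ : ℕ∞) ψ)
    (hflat : ∀ x : ℝ → (Fin n → ℝ), ContDiff ℝ (⊤ : ℕ∞) x →
      (∀ t : ℝ, F (x t, deriv x t) = 0) → ∀ t : ℝ,
      x t = φ (fun i : Fin (r+1) => iteratedDeriv i.val
        (fun τ : ℝ => ψ (fun j : Fin (s+1) => iteratedDeriv j.val x τ)) t)) :
    ∀ (x₀ p₀ : Fin n → ℝ), F (x₀, p₀) = 0 →
      ∃ z : Fin (r+2) → (Fin m → ℝ),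
        φ (fun j => z j.castSucc) = x₀ ∧ Ltau φ z = p₀ :=
  stmt_3_general n m q μ r s F f hFf hparam hflow φ hφ ψ hψ hflat
end

section
/- (Main theorem: the flatness criterion implies the Kalman rank condition at equilibrium points.) Let F : ℝ^n × ℝ^n → ℝ^q and f : ℝ^n × ℝ^m → ℝ^n be smooth maps with F(x, f(x,u)) = 0 for all (x,u). Let φ : (ℝ^m)^{r+1} → ℝ^n be a smooth map satisfying the parameter PDE for F. Let (x_0, u_0) be an equilibrium point, i.e. f(x_0, u_0) = 0, let y_0 ∈ ℝ^m satisfy φ(y_0, 0, …, 0) = x_0, and assume the Fréchet derivative of φ at (y_0, 0, …, 0) is surjective onto ℝ^n. Set A = ∂f/∂x(x_0, u_0) : ℝ^n → ℝ^n and B = range(∂f/∂u(x_0, u_0)) ⊆ ℝ^n, and assume B = ker(∂F/∂p(x_0, 0)). Then B + A(B) + A²(B) + ⋯ + A^r(B) = ℝ^n; in particular the linearization of the system at the equilibrium satisfies the Kalman controllability rank condition. -/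
/-!
Let `ŷ = (y₀, 0, …, 0)`, `Dφ = Dφ(ŷ)`, `Φᵢ = ∂φ/∂yᵢ(ŷ)` and `DF = DF(x₀, 0)`. Since
`L_τφ(z) = Dφ(init z)(tail z)` and `L_τφ` vanishes at `ẑ = (y₀, 0, …, 0) ∈ (ℝ^m)^{r+2}`,
differentiating the parameter PDE at `ẑ` gives `DF(Dφ(init w), Dφ(tail w)) = 0` for every `w`;
differentiating `F(x, f(x, u₀)) = 0` at the equilibrium gives `DF(ξ, Aξ) = 0`. Hence
`b - Aa ∈ B = ker DF(0, ·)` whenever `DF(a, b) = 0`. Choosing `w` supported in a single slot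
yields `range Φ_r ⊆ B` and `range Φᵢ ⊆ B + A(range Φᵢ₊₁)`, so by descending induction
`range Φᵢ ⊆ B + AB + ⋯ + A^{r-i}B`. As `Dφ = Σ Φᵢ` is onto, the Kalman space is everything.
-/

open Finset

section Krylov

variable {R M : Type*} [Semiring R] [AddCommMonoid M] [Module R M]

def krylov (A : M →ₗ[R] M) (B : Submodule R M) (k : ℕ) : Submodule R M :=
  ∑ j ∈ range k, B.map (A ^ j)

variable (A : M →ₗ[R] M) (B : Submodule R M)

@[simp] theorem krylov_zero : krylov A B 0 = ⊥ := rfl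

theorem krylov_succ' (k : ℕ) : krylov A B (k + 1) = krylov A B k ⊔ B.map (A ^ k) :=
  sum_range_succ _ _

theorem krylov_succ (k : ℕ) : krylov A B (k + 1) = B ⊔ (krylov A B k).map A := by
  induction k with
  | zero => simp [krylov_succ', Module.End.one_eq_id]
  | succ k ih =>
    conv_rhs => rw [krylov_succ', Submodule.map_sup, ← sup_assoc, ← ih]
    rw [krylov_succ' A B (k + 1), pow_succ', Module.End.mul_eq_comp, Submodule.map_comp]

theorem krylov_mono : Monotone (krylov A B) := fun _ _ hkl =>
  sum_le_sum_of_subset (range_subset_range.mpr hkl)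

theorem le_krylov_of_chain {r : ℕ} (V : Fin (r + 1) → Submodule R M)
    (hlast : V (Fin.last r) ≤ B)
    (hstep : ∀ i : Fin r, V i.castSucc ≤ B ⊔ (V i.succ).map A) (i : Fin (r + 1)) :
    V i ≤ krylov A B (r + 1 - i) := by
  induction i using Fin.reverseInduction with
  | last => simpa [krylov_succ] using hlast
  | cast i ih =>
    have hi : r + 1 - i.castSucc = r + 1 - i.succ + 1 := by
      simp only [Fin.val_castSucc, Fin.val_succ]; omega
    rw [hi, krylov_succ]
    exact (hstep i).trans (sup_le_sup_left (Submodule.map_mono ih) B)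

theorem krylov_eq_top_of_chain {r : ℕ} (V : Fin (r + 1) → Submodule R M)
    (hlast : V (Fin.last r) ≤ B) (hstep : ∀ i : Fin r, V i.castSucc ≤ B ⊔ (V i.succ).map A)
    (hV : ⨆ i, V i = ⊤) : krylov A B (r + 1) = ⊤ :=
  top_le_iff.mp <| hV ▸ iSup_le fun i =>
    (le_krylov_of_chain A B V hlast hstep i).trans (krylov_mono A B (Nat.sub_le _ _))

end Krylov

section Tuples

variable (R E : Type*) [Semiring R] [TopologicalSpace E] [AddCommMonoid E] [Module R E] (n : ℕ)

def ContinuousLinearMap.finInit : (Fin (n + 1) → E) →L[R] (Fin n → E) :=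
  ContinuousLinearMap.pi fun j => ContinuousLinearMap.proj j.castSucc

def ContinuousLinearMap.finTail : (Fin (n + 1) → E) →L[R] (Fin n → E) :=
  ContinuousLinearMap.pi fun j => ContinuousLinearMap.proj j.succ

variable {R E n}

@[simp] theorem ContinuousLinearMap.finTail_apply (z : Fin (n + 1) → E) :
    ContinuousLinearMap.finTail R E n z = Fin.tail z := rfl

end Tuples

section PiSingle

variable {E : Type*} [AddCommMonoid E] {n : ℕ}

theorem Fin.init_single_castSucc (k : Fin (n + 1)) (v : E) :
    Fin.init (Pi.single k.castSucc v : Fin (n + 2) → E) = Pi.single k v := by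
  rw [Pi.single, Fin.init_update_castSucc]; rfl

theorem Fin.init_single_last (v : E) :
    Fin.init (Pi.single (Fin.last (n + 1)) v : Fin (n + 2) → E) = 0 := by
  rw [Pi.single, Fin.init_update_last]; rfl

theorem Fin.tail_single_succ (k : Fin (n + 1)) (v : E) :
    Fin.tail (Pi.single k.succ v : Fin (n + 2) → E) = Pi.single k v := by
  rw [Pi.single, Fin.tail_update_succ]; rfl

theorem Fin.tail_single_zero (v : E) : Fin.tail (Pi.single 0 v : Fin (n + 1) → E) = 0 := by
  rw [Pi.single, Fin.tail_update_zero]; rfl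

end PiSingle

theorem HasFDerivAt.apply_prodMk_eq_zero {E G H₁ H₂ : Type*} [NormedAddCommGroup E]
    [NormedSpace ℝ E] [NormedAddCommGroup G] [NormedSpace ℝ G] [NormedAddCommGroup H₁]
    [NormedSpace ℝ H₁] [NormedAddCommGroup H₂] [NormedSpace ℝ H₂]
    {Φ : H₁ × H₂ → G} {Φ' : H₁ × H₂ →L[ℝ] G} {g : E → H₁} {g' : E →L[ℝ] H₁} {h : E → H₂}
    {h' : E →L[ℝ] H₂} {z₀ : E} (hΦ : HasFDerivAt Φ Φ' (g z₀, h z₀)) (hg : HasFDerivAt g g' z₀)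
    (hh : HasFDerivAt h h' z₀) (hzero : ∀ z, Φ (g z, h z) = 0) (w : E) :
    Φ' (g' w, h' w) = 0 := by
  have hconst : HasFDerivAt (fun z => Φ (g z, h z)) (0 : E →L[ℝ] G) z₀ := by
    simp only [hzero]
    exact hasFDerivAt_const 0 z₀
  exact congr($((hΦ.comp z₀ (hg.prodMk hh)).unique hconst) w)

theorem krylov_ker_inr_eq_top {R E M G : Type*} [Ring R] [AddCommGroup E] [Module R E]
    [AddCommGroup M] [Module R M] [AddCommGroup G] [Module R G] {r : ℕ} (L : E × E →ₗ[R] G)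
    (A : E →ₗ[R] E) (P : (Fin (r + 1) → M) →ₗ[R] E) (hP : Function.Surjective P)
    (hA : ∀ ξ, L (ξ, A ξ) = 0)
    (hrel : ∀ w : Fin (r + 2) → M, L (P (Fin.init w), P (Fin.tail w)) = 0) :
    krylov A (LinearMap.ker (L ∘ₗ LinearMap.inr R E E)) (r + 1) = ⊤ := by
  have hker :
      ∀ {a b}, L (a, b) = 0 → b - A a ∈ LinearMap.ker (L ∘ₗ LinearMap.inr R E E) :=
    fun {a b} h => by
      rw [LinearMap.mem_ker, LinearMap.comp_apply, LinearMap.inr_apply,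
        show ((0 : E), b - A a) = (a, b) - (a, A a) by simp, map_sub, h, hA, sub_zero]
  refine krylov_eq_top_of_chain A _ (fun i => LinearMap.range (P ∘ₗ LinearMap.single R _ i))
    ?_ ?_ ?_
  · rintro _ ⟨v, rfl⟩
    have h := hker (hrel (Pi.single (Fin.last (r + 1)) v))
    rwa [Fin.init_single_last, ← Fin.succ_last, Fin.tail_single_succ, map_zero, map_zero,
      sub_zero] at h
  · rintro i _ ⟨v, rfl⟩
    have h := hker (hrel (Pi.single i.succ.castSucc v))
    rw [Fin.init_single_castSucc, ← Fin.succ_castSucc, Fin.tail_single_succ] at h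
    exact Submodule.mem_sup.mpr ⟨_, h, _, ⟨_, ⟨v, rfl⟩, rfl⟩, sub_add_cancel _ _⟩
  · simp_rw [LinearMap.range_comp, ← Submodule.map_iSup, LinearMap.iSup_range_single,
      Submodule.map_top, LinearMap.range_eq_top]
    exact hP

section Ltau

variable {m n r : ℕ} {φ : (Fin (r + 1) → (Fin m → ℝ)) → (Fin n → ℝ)}

theorem Ltau_eq_fderiv_init_tail (z : Fin (r + 2) → (Fin m → ℝ)) :
    Ltau φ z = fderiv ℝ φ (Fin.init z) (Fin.tail z) := by
  rw [Ltau, ← map_sum, Finset.univ_sum_single]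
  rfl

theorem hasFDerivAt_Ltau (hφ : ContDiff ℝ 2 φ) {z : Fin (r + 2) → (Fin m → ℝ)}
    (hz : Fin.tail z = 0) :
    HasFDerivAt (Ltau φ)
      ((fderiv ℝ φ (Fin.init z)).comp (.finTail ℝ (Fin m → ℝ) (r + 1))) z := by
  have hDφ : HasFDerivAt (fun z => fderiv ℝ φ (Fin.init z))
      ((fderiv ℝ (fderiv ℝ φ) (Fin.init z)).comp (.finInit ℝ (Fin m → ℝ) (r + 1))) z :=
    ((hφ.fderiv_right (m := 1) le_rfl).differentiable one_ne_zero _).hasFDerivAt.comp z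
      (ContinuousLinearMap.finInit ℝ (Fin m → ℝ) (r + 1)).hasFDerivAt
  have h := hDφ.clm_apply (ContinuousLinearMap.finTail ℝ (Fin m → ℝ) (r + 1)).hasFDerivAt
  simp only [ContinuousLinearMap.finTail_apply, hz, map_zero, add_zero] at h
  rwa [show Ltau φ = _ from funext Ltau_eq_fderiv_init_tail]

theorem fderiv_init_tail_eq_zero_of_PDE {G : Type*} [NormedAddCommGroup G] [NormedSpace ℝ G]
    {F : (Fin n → ℝ) × (Fin n → ℝ) → G} {F' : (Fin n → ℝ) × (Fin n → ℝ) →L[ℝ] G}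
    (hφ : ContDiff ℝ 2 φ) (hPDE : ∀ z, F (φ (Fin.init z), Ltau φ z) = 0)
    {z₀ : Fin (r + 2) → (Fin m → ℝ)} (hz₀ : Fin.tail z₀ = 0)
    (hF : HasFDerivAt F F' (φ (Fin.init z₀), 0)) (w : Fin (r + 2) → (Fin m → ℝ)) :
    F' (fderiv ℝ φ (Fin.init z₀) (Fin.init w),
      fderiv ℝ φ (Fin.init z₀) (Fin.tail w)) = 0 := by
  have hL : Ltau φ z₀ = 0 := by rw [Ltau_eq_fderiv_init_tail, hz₀, map_zero]
  rw [← hL] at hF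
  exact hF.apply_prodMk_eq_zero
    ((hφ.differentiable two_ne_zero _).hasFDerivAt.comp z₀
      (ContinuousLinearMap.finInit ℝ (Fin m → ℝ) (r + 1)).hasFDerivAt)
    (hasFDerivAt_Ltau hφ hz₀) hPDE w

end Ltau

theorem stmt_14_general (n m q r : ℕ)
    (F : (Fin n → ℝ) × (Fin n → ℝ) → (Fin q → ℝ)) (hF : ContDiff ℝ (⊤ : ℕ∞) F)
    (f : (Fin n → ℝ) × (Fin m → ℝ) → (Fin n → ℝ)) (hf : ContDiff ℝ (⊤ : ℕ∞) f)
    (hFf : ∀ (x : Fin n → ℝ) (u : Fin m → ℝ), F (x, f (x, u)) = 0)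
    (φ : (Fin (r+1) → (Fin m → ℝ)) → (Fin n → ℝ)) (hφ : ContDiff ℝ (⊤ : ℕ∞) φ)
    (hPDE : ∀ z : Fin (r+2) → (Fin m → ℝ),
      F (φ (fun j => z j.castSucc), Ltau φ z) = 0)
    (x₀ : Fin n → ℝ) (u₀ : Fin m → ℝ) (heq : f (x₀, u₀) = 0)
    (y₀ : Fin m → ℝ) (hy₀ : φ (Pi.single (0 : Fin (r+1)) y₀) = x₀)
    (hsurj : Function.Surjective (fderiv ℝ φ (Pi.single (0 : Fin (r+1)) y₀)))
    (hB : LinearMap.range ((fderiv ℝ (fun u => f (x₀, u)) u₀ : (Fin m → ℝ) →ₗ[ℝ] (Fin n → ℝ))) =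
      LinearMap.ker ((fderiv ℝ (fun p => F (x₀, p)) 0 : (Fin n → ℝ) →ₗ[ℝ] (Fin q → ℝ)))) :
    ∑ j ∈ Finset.range (r + 1),
      Submodule.map ((((fderiv ℝ (fun x => f (x, u₀)) x₀) ^ j : (Fin n → ℝ) →L[ℝ] (Fin n → ℝ)) :
          (Fin n → ℝ) →ₗ[ℝ] (Fin n → ℝ)))
        (LinearMap.range ((fderiv ℝ (fun u => f (x₀, u)) u₀ : (Fin m → ℝ) →ₗ[ℝ] (Fin n → ℝ)))) = ⊤ := by
  set A := fderiv ℝ (fun x => f (x, u₀)) x₀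
  set B :=
    LinearMap.range ((fderiv ℝ (fun u => f (x₀, u)) u₀ : (Fin m → ℝ) →ₗ[ℝ] (Fin n → ℝ)))
  set DF := fderiv ℝ F (x₀, 0)
  set Dφ := fderiv ℝ φ (Pi.single 0 y₀)
  have hDF : HasFDerivAt F DF (x₀, 0) := (hF.differentiable (by simp) _).hasFDerivAt
  have hFp : HasFDerivAt (fun p => F (x₀, p)) (DF.comp (.inr ℝ _ _)) 0 :=
    hDF.comp 0 (hasFDerivAt_prodMk_right x₀ 0)
  have hB' : B = LinearMap.ker
      ((DF : (Fin n → ℝ) × (Fin n → ℝ) →ₗ[ℝ] Fin q → ℝ) ∘ₗ LinearMap.inr ℝ _ _) := by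
    rw [hB, hFp.fderiv]
    rfl
  have hA : ∀ ξ, DF (ξ, A ξ) = 0 := by
    refine HasFDerivAt.apply_prodMk_eq_zero (g := id) ?_ (hasFDerivAt_id x₀) ?_ (hFf · u₀)
    · rwa [id, heq]
    · exact ((hf.differentiable (by simp)).comp
        (differentiable_id.prodMk (differentiable_const u₀)) x₀).hasFDerivAt
  have hrel : ∀ w : Fin (r + 2) → Fin m → ℝ, DF (Dφ (Fin.init w), Dφ (Fin.tail w)) = 0 := by
    have hinit : Fin.init (Pi.single 0 y₀ : Fin (r + 2) → Fin m → ℝ) = Pi.single 0 y₀ :=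
      Fin.init_single_castSucc 0 y₀
    have h := fderiv_init_tail_eq_zero_of_PDE (hφ.of_le (WithTop.coe_le_coe.mpr le_top)) hPDE
      (Fin.tail_single_zero y₀) (F' := DF) (by rwa [hinit, hy₀])
    simpa only [hinit] using h
  simp_rw [ContinuousLinearMap.toLinearMap_pow]
  rw [hB']
  exact krylov_ker_inr_eq_top _ _ (Dφ : (Fin (r + 1) → Fin m → ℝ) →ₗ[ℝ] Fin n → ℝ)
    hsurj hA hrel

/-- Main theorem: the flatness criterion implies the Kalman rank condition at
equilibrium points. If `φ` satisfies the parameter PDE for `F`, `(x₀,u₀)` is an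
equilibrium (`f(x₀,u₀) = 0`), `φ(y₀,0,…,0) = x₀`, the derivative of `φ` at
`(y₀,0,…,0)` is surjective, and `B = range ∂f/∂u(x₀,u₀) = ker ∂F/∂p(x₀,0)`, then
with `A = ∂f/∂x(x₀,u₀)` one has `B + A(B) + ⋯ + A^r(B) = ℝ^n`. -/
theorem stmt_14 (n m q r : ℕ) (hn : 0 < n) (hm : 0 < m) (hq : 0 < q)
    (F : (Fin n → ℝ) × (Fin n → ℝ) → (Fin q → ℝ)) (hF : ContDiff ℝ (⊤ : ℕ∞) F)
    (f : (Fin n → ℝ) × (Fin m → ℝ) → (Fin n → ℝ)) (hf : ContDiff ℝ (⊤ : ℕ∞) f)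
    (hFf : ∀ (x : Fin n → ℝ) (u : Fin m → ℝ), F (x, f (x, u)) = 0)
    (φ : (Fin (r+1) → (Fin m → ℝ)) → (Fin n → ℝ)) (hφ : ContDiff ℝ (⊤ : ℕ∞) φ)
    (hPDE : ∀ z : Fin (r+2) → (Fin m → ℝ),
      F (φ (fun j => z j.castSucc), Ltau φ z) = 0)
    (x₀ : Fin n → ℝ) (u₀ : Fin m → ℝ) (heq : f (x₀, u₀) = 0)
    (y₀ : Fin m → ℝ) (hy₀ : φ (Pi.single (0 : Fin (r+1)) y₀) = x₀)
    (hsurj : Function.Surjective (fderiv ℝ φ (Pi.single (0 : Fin (r+1)) y₀)))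
    (hB : LinearMap.range ((fderiv ℝ (fun u => f (x₀, u)) u₀ : (Fin m → ℝ) →ₗ[ℝ] (Fin n → ℝ))) =
      LinearMap.ker ((fderiv ℝ (fun p => F (x₀, p)) 0 : (Fin n → ℝ) →ₗ[ℝ] (Fin q → ℝ)))) :
    ∑ j ∈ Finset.range (r + 1),
      Submodule.map ((((fderiv ℝ (fun x => f (x, u₀)) x₀) ^ j : (Fin n → ℝ) →L[ℝ] (Fin n → ℝ)) :
          (Fin n → ℝ) →ₗ[ℝ] (Fin n → ℝ)))
        (LinearMap.range ((fderiv ℝ (fun u => f (x₀, u)) u₀ : (Fin m → ℝ) →ₗ[ℝ] (Fin n → ℝ)))) = ⊤ :=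
  stmt_14_general n m q r F hF f hf hFf φ hφ hPDE x₀ u₀ heq y₀ hy₀ hsurj hB
end
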